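/- (Excess risk bound for random sampling, Theorem 1(1).) Let 𝓛 : ℝ^d → ℝ be differentiable, L-smooth, and satisfy the μ-PL condition with infimum value 𝓛*. Let (W_t, G_t)_{t∈ℕ} be a stochastic-gradient process for 𝓛 with step size η, growth constant h ≥ 0 and noise level σ ≥ 0, with deterministic initial point W_0 = w_0. If 0 < η ≤ 1/(L(1 + h)) and ημ ≤ 1, then for every T ∈ ℕ, E[𝓛(W_T)] − 𝓛* ≤ exp(−ημT)(𝓛(w_0) − 𝓛*) + ηLσ²/(2μ). -/

import Mathlib

/-!
For an `L`-smooth objective the descent lemma gives, pointwise,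
`𝓛(W_{t+1}) ≤ 𝓛(W_t) - η⟪∇𝓛(W_t), G_t⟫ + Lη²/2 ‖G_t‖²`. Conditioning on `ℱ_t` turns the cross
term into `E‖∇𝓛(W_t)‖²` and the second moment into at most `(1 + h/2) E‖∇𝓛(W_t)‖² + σ²`, so the
step-size condition leaves a decrease of `η/2 · E‖∇𝓛(W_t)‖²`, which the PL inequality converts into
`(1 - ημ)` times the excess risk, up to the noise term `Lη²σ²/2`. Iterating this contraction and
using `1 - ημ ≤ exp(-ημ)` gives the bound.
-/

open MeasureTheory RealInnerProductSpace
open scoped NNReal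

section
variable {E : Type*} [NormedAddCommGroup E] [InnerProductSpace ℝ E] [CompleteSpace E]
  {f : E → ℝ} {K : ℝ≥0}

theorem le_add_inner_add_sq_of_lipschitzWith_gradient (hf : Differentiable ℝ f)
    (hlip : LipschitzWith K (gradient f)) (x y : E) :
    f y ≤ f x + ⟪gradient f x, y - x⟫ + K / 2 * ‖y - x‖ ^ 2 := by
  set v := y - x
  let φ : ℝ → ℝ := fun t => f (x + t • v) - t * ⟪gradient f x, v⟫ - K / 2 * t ^ 2 * ‖v‖ ^ 2
  have hderiv : ∀ t, HasDerivAt φ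
      (⟪gradient f (x + t • v) - gradient f x, v⟫ - K * t * ‖v‖ ^ 2) t := by
    intro t
    have hpath : HasDerivAt (fun t : ℝ => x + t • v) v t := by
      simpa using ((hasDerivAt_id t).smul_const v).const_add x
    have hf_path : HasDerivAt (fun t => f (x + t • v)) ⟪gradient f (x + t • v), v⟫ t := by
      simpa [Function.comp_def, InnerProductSpace.toDual_apply_apply] using
        ((hf _).hasGradientAt.hasFDerivAt).comp_hasDerivAt t hpath
    have hlin : HasDerivAt (fun t => t * ⟪gradient f x, v⟫) ⟪gradient f x, v⟫ t := by
      simpa using (hasDerivAt_id t).mul_const ⟪gradient f x, v⟫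
    have hquad :
        HasDerivAt (fun t => K / 2 * t ^ 2 * ‖v‖ ^ 2) (K / 2 * (2 * t) * ‖v‖ ^ 2) t := by
      simpa using ((hasDerivAt_pow 2 t).const_mul (K / 2 : ℝ)).mul_const (‖v‖ ^ 2)
    refine ((hf_path.sub hlin).sub hquad).congr_deriv ?_
    rw [inner_sub_left]
    ring
  have hslope : ∀ t ∈ interior (Set.Icc (0 : ℝ) 1),
      ⟪gradient f (x + t • v) - gradient f x, v⟫ - K * t * ‖v‖ ^ 2 ≤ 0 := by
    intro t ht
    rw [interior_Icc] at ht
    have hgrad : ‖gradient f (x + t • v) - gradient f x‖ ≤ K * (t * ‖v‖) := by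
      simpa [dist_eq_norm, norm_smul, abs_of_pos ht.1] using hlip.dist_le_mul (x + t • v) x
    have := real_inner_le_norm (gradient f (x + t • v) - gradient f x) v
    nlinarith [norm_nonneg v]
  have hanti : AntitoneOn φ (Set.Icc 0 1) :=
    antitoneOn_of_hasDerivWithinAt_nonpos (convex_Icc 0 1)
      (fun t _ => (hderiv t).continuousAt.continuousWithinAt)
      (fun t _ => (hderiv t).hasDerivWithinAt) hslope
  have := hanti (Set.left_mem_Icc.2 zero_le_one) (Set.right_mem_Icc.2 zero_le_one) zero_le_one
  simp only [φ, one_smul, zero_smul, add_zero, one_pow, zero_pow two_ne_zero, one_mul, zero_mul,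
    mul_zero, sub_zero, add_sub_cancel, v] at this
  linarith

theorem le_sub_inner_add_sq_of_lipschitzWith_gradient (hf : Differentiable ℝ f)
    (hlip : LipschitzWith K (gradient f)) (x g : E) (η : ℝ) :
    f (x - η • g) ≤ f x - η * ⟪gradient f x, g⟫ + K * η ^ 2 / 2 * ‖g‖ ^ 2 := by
  have := le_add_inner_add_sq_of_lipschitzWith_gradient hf hlip x (x - η • g)
  rw [sub_sub_cancel_left, inner_neg_right, real_inner_smul_right, norm_neg, norm_smul,
    Real.norm_eq_abs, mul_pow, sq_abs] at this
  linarith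

theorem integrable_comp_of_lipschitzWith_gradient {Ω : Type*} {mΩ : MeasurableSpace Ω}
    {P : Measure Ω} [IsFiniteMeasure P] (hf : Differentiable ℝ f)
    (hlip : LipschitzWith K (gradient f)) {c : ℝ} (hc : ∀ v, c ≤ f v) {X : Ω → E}
    (hX : MemLp X 2 P) : Integrable (fun ω => f (X ω)) P := by
  refine integrable_of_le_of_le (g₁ := fun _ => c)
    (g₂ := fun ω => f 0 + ⟪gradient f 0, X ω⟫ + K / 2 * ‖X ω‖ ^ 2)
    (hf.continuous.comp_aestronglyMeasurable hX.1) (ae_of_all _ fun ω => hc (X ω))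
    (ae_of_all _ fun ω => by
      simpa using le_add_inner_add_sq_of_lipschitzWith_gradient hf hlip 0 (X ω))
    (integrable_const c) ?_
  exact ((integrable_const _).add ((hX.integrable one_le_two).const_inner _)).add
    ((hX.integrable_norm_pow two_ne_zero).const_mul _)

end

theorem LipschitzWith.memLp_comp {Ω E F : Type*} {mΩ : MeasurableSpace Ω} {P : Measure Ω}
    [IsFiniteMeasure P] [NormedAddCommGroup E] [NormedAddCommGroup F] {K : ℝ≥0} {p : ENNReal}
    {g : E → F} (hg : LipschitzWith K g) {X : Ω → E} (hX : MemLp X p P) :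
    MemLp (fun ω => g (X ω)) p P := by
  have h0 : MemLp (fun ω => g (X ω) - g 0) p P :=
    (hg.sub (LipschitzWith.const (g 0))).comp_memLp (sub_self _) hX
  simpa [Pi.add_def] using h0.add (memLp_const (g 0))

section

variable {Ω E : Type*} {m mΩ : MeasurableSpace Ω} {P : Measure Ω}
  [NormedAddCommGroup E] [InnerProductSpace ℝ E]

theorem MeasureTheory.MemLp.integrable_inner {f g : Ω → E} (hf : MemLp f 2 P)
    (hg : MemLp g 2 P) : Integrable (fun ω => ⟪f ω, g ω⟫) P :=
  memLp_one_iff_integrable.1 ((innerSL ℝ).memLp_of_bilin 1 hf hg)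

variable [CompleteSpace E] {X G : Ω → E}

theorem integral_inner_eq_integral_norm_sq_of_condExp_eq [IsFiniteMeasure P] (hm : m ≤ mΩ)
    (hX : StronglyMeasurable[m] X) (hX2 : MemLp X 2 P) (hG2 : MemLp G 2 P)
    (hGX : P[G|m] =ᵐ[P] X) :
    ∫ ω, ⟪X ω, G ω⟫ ∂P = ∫ ω, ‖X ω‖ ^ 2 ∂P := by
  have hpull := condExp_bilin_of_stronglyMeasurable_left (innerSL ℝ) hX
    (hX2.integrable_inner hG2) (hG2.integrable one_le_two)
  calc ∫ ω, ⟪X ω, G ω⟫ ∂P = ∫ ω, ⟪X ω, P[G|m] ω⟫ ∂P :=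
        (integral_condExp hm).symm.trans (integral_congr_ae hpull)
    _ = ∫ ω, ‖X ω‖ ^ 2 ∂P := integral_congr_ae <| hGX.mono fun ω hω => by
        simp only [hω, real_inner_self_eq_norm_sq]

theorem integral_norm_sq_eq_integral_norm_sub_sq_add_of_condExp_eq [IsFiniteMeasure P]
    (hm : m ≤ mΩ) (hX : StronglyMeasurable[m] X) (hX2 : MemLp X 2 P) (hG2 : MemLp G 2 P)
    (hGX : P[G|m] =ᵐ[P] X) :
    ∫ ω, ‖G ω‖ ^ 2 ∂P = ∫ ω, ‖G ω - X ω‖ ^ 2 ∂P + ∫ ω, ‖X ω‖ ^ 2 ∂P := by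
  have hcross := integral_inner_eq_integral_norm_sq_of_condExp_eq hm hX hX2 hG2 hGX
  have hexpand : ∀ ω, ‖G ω - X ω‖ ^ 2 = ‖G ω‖ ^ 2 - 2 * ⟪X ω, G ω⟫ + ‖X ω‖ ^ 2 := fun ω => by
    rw [norm_sub_sq_real, real_inner_comm]
  have hGG := hG2.integrable_norm_pow two_ne_zero
  have hXG : Integrable (fun ω => 2 * ⟪X ω, G ω⟫) P := (hX2.integrable_inner hG2).const_mul 2
  have hGXG : Integrable (fun ω => ‖G ω‖ ^ 2 - 2 * ⟪X ω, G ω⟫) P := hGG.sub hXG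
  simp only [hexpand]
  rw [integral_add hGXG (hX2.integrable_norm_pow two_ne_zero), integral_sub hGG hXG,
    integral_const_mul, hcross]
  ring

end

theorem le_exp_neg_mul_add_of_le_one_sub_mul_add {u : ℕ → ℝ} {a b : ℝ} (ha : a ≤ 1)
    (hb : 0 ≤ b) (hu0 : 0 ≤ u 0) (hu : ∀ t, u (t + 1) ≤ (1 - a) * u t + a * b) (t : ℕ) :
    u t ≤ Real.exp (-a * t) * u 0 + b := by
  have hpow : ∀ t, u t ≤ (1 - a) ^ t * u 0 + b := by
    intro t
    induction t with
    | zero => simpa using hb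
    | succ t ih =>
      calc u (t + 1) ≤ (1 - a) * ((1 - a) ^ t * u 0 + b) + a * b :=
            (hu t).trans (by gcongr)
        _ = (1 - a) ^ (t + 1) * u 0 + b := by ring
  have hexp : (1 - a) ^ t ≤ Real.exp (-a * t) := by
    rw [mul_comm, Real.exp_nat_mul]
    exact pow_le_pow_left₀ (by linarith) (Real.one_sub_le_exp_neg a) t
  linarith [hpow t, mul_le_mul_of_nonneg_right hexp hu0]

section SGD

variable {E : Type*} [NormedAddCommGroup E] [InnerProductSpace ℝ E] [CompleteSpace E]
  {Ω : Type*} {mΩ : MeasurableSpace Ω} {P : Measure Ω} {ℱ : Filtration ℕ mΩ}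
  {f : E → ℝ} {η h σ : ℝ} {W G : ℕ → Ω → E} {K : ℝ≥0}

structure IsSGDProcess (P : Measure Ω) (ℱ : Filtration ℕ mΩ) (f : E → ℝ) (η h σ : ℝ)
    (W G : ℕ → Ω → E) : Prop where
  adapted : StronglyAdapted ℱ W
  memLp_two : ∀ t, MemLp (G t) 2 P
  update : ∀ t, ∀ᵐ ω ∂P, W (t + 1) ω = W t ω - η • G t ω
  condExp_eq : ∀ t, P[G t|ℱ t] =ᵐ[P] fun ω => gradient f (W t ω)
  condExp_norm_sub_sq_le : ∀ t, ∀ᵐ ω ∂P,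
    P[fun ω' => ‖G t ω' - gradient f (W t ω')‖ ^ 2|ℱ t] ω ≤
      h / 2 * ‖gradient f (W t ω)‖ ^ 2 + σ ^ 2

namespace IsSGDProcess

theorem memLp_two_iterate (hS : IsSGDProcess P ℱ f η h σ W G) (h0 : MemLp (W 0) 2 P) :
    ∀ t, MemLp (W t) 2 P
  | 0 => h0
  | t + 1 => ((hS.memLp_two_iterate h0 t).sub ((hS.memLp_two t).const_smul η)).ae_eq
      ((hS.update t).mono fun _ hω => hω.symm)

variable [IsProbabilityMeasure P]

theorem integral_norm_sq_le (hS : IsSGDProcess P ℱ f η h σ W G)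
    (hlip : LipschitzWith K (gradient f)) (h0 : MemLp (W 0) 2 P) (t : ℕ) :
    ∫ ω, ‖G t ω‖ ^ 2 ∂P ≤ (1 + h / 2) * ∫ ω, ‖gradient f (W t ω)‖ ^ 2 ∂P + σ ^ 2 := by
  have hX := hlip.continuous.comp_stronglyMeasurable (hS.adapted t)
  have hX2 := hlip.memLp_comp (hS.memLp_two_iterate h0 t)
  have hXX := hX2.integrable_norm_pow two_ne_zero
  have hvar : ∫ ω, ‖G t ω - gradient f (W t ω)‖ ^ 2 ∂P ≤
      h / 2 * ∫ ω, ‖gradient f (W t ω)‖ ^ 2 ∂P + σ ^ 2 := by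
    calc ∫ ω, ‖G t ω - gradient f (W t ω)‖ ^ 2 ∂P
        = ∫ ω, P[fun ω' => ‖G t ω' - gradient f (W t ω')‖ ^ 2|ℱ t] ω ∂P :=
          (integral_condExp (ℱ.le t)).symm
      _ ≤ ∫ ω, (h / 2 * ‖gradient f (W t ω)‖ ^ 2 + σ ^ 2) ∂P :=
          integral_mono_ae integrable_condExp ((hXX.const_mul _).add (integrable_const _))
            (hS.condExp_norm_sub_sq_le t)
      _ = h / 2 * ∫ ω, ‖gradient f (W t ω)‖ ^ 2 ∂P + σ ^ 2 := by
          rw [integral_add (hXX.const_mul _) (integrable_const _), integral_const_mul,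
            integral_const, probReal_univ, one_smul]
  rw [integral_norm_sq_eq_integral_norm_sub_sq_add_of_condExp_eq (ℱ.le t) hX hX2
    (hS.memLp_two t) (hS.condExp_eq t)]
  linarith

theorem integral_le_integral_sub_add (hS : IsSGDProcess P ℱ f η h σ W G)
    (hf : Differentiable ℝ f) (hlip : LipschitzWith K (gradient f)) {c : ℝ} (hc : ∀ v, c ≤ f v)
    (h0 : MemLp (W 0) 2 P) (hh : 0 ≤ h) (hη0 : 0 ≤ η) (hη : η * K * (1 + h) ≤ 1) (t : ℕ) :
    ∫ ω, f (W (t + 1) ω) ∂P ≤ ∫ ω, f (W t ω) ∂P - η / 2 * ∫ ω, ‖gradient f (W t ω)‖ ^ 2 ∂P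
      + K * η ^ 2 * σ ^ 2 / 2 := by
  have hX := hlip.continuous.comp_stronglyMeasurable (hS.adapted t)
  have hX2 := hlip.memLp_comp (hS.memLp_two_iterate h0 t)
  have hG2 := hS.memLp_two t
  have hfW := integrable_comp_of_lipschitzWith_gradient hf hlip hc (hS.memLp_two_iterate h0 t)
  have hXG : Integrable (fun ω => η * ⟪gradient f (W t ω), G t ω⟫) P :=
    (hX2.integrable_inner hG2).const_mul η
  have hGG : Integrable (fun ω => K * η ^ 2 / 2 * ‖G t ω‖ ^ 2) P :=
    (hG2.integrable_norm_pow two_ne_zero).const_mul _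
  have hfXG : Integrable (fun ω => f (W t ω) - η * ⟪gradient f (W t ω), G t ω⟫) P :=
    hfW.sub hXG
  have hdescent : ∀ᵐ ω ∂P, f (W (t + 1) ω) ≤
      f (W t ω) - η * ⟪gradient f (W t ω), G t ω⟫ + K * η ^ 2 / 2 * ‖G t ω‖ ^ 2 := by
    filter_upwards [hS.update t] with ω hω
    rw [hω]
    exact le_sub_inner_add_sq_of_lipschitzWith_gradient hf hlip _ _ η
  have hmean := integral_inner_eq_integral_norm_sq_of_condExp_eq (ℱ.le t) hX hX2 hG2
    (hS.condExp_eq t)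
  have hsecond := hS.integral_norm_sq_le hlip h0 t
  have hK : K * η * (1 + h / 2) ≤ 1 := by nlinarith
  have hN : 0 ≤ ∫ ω, ‖gradient f (W t ω)‖ ^ 2 ∂P := integral_nonneg fun ω => by positivity
  calc ∫ ω, f (W (t + 1) ω) ∂P
      ≤ ∫ ω, (f (W t ω) - η * ⟪gradient f (W t ω), G t ω⟫ + K * η ^ 2 / 2 * ‖G t ω‖ ^ 2) ∂P :=
        integral_mono_ae (integrable_comp_of_lipschitzWith_gradient hf hlip hc
          (hS.memLp_two_iterate h0 (t + 1))) (hfXG.add hGG) hdescent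
    _ = ∫ ω, f (W t ω) ∂P - η * ∫ ω, ‖gradient f (W t ω)‖ ^ 2 ∂P
          + K * η ^ 2 / 2 * ∫ ω, ‖G t ω‖ ^ 2 ∂P := by
        rw [integral_add hfXG hGG, integral_sub hfW hXG, integral_const_mul,
          integral_const_mul, hmean]
    _ ≤ _ := by
        have hcoef := mul_nonneg (mul_nonneg hη0 hN) (sub_nonneg.2 hK)
        nlinarith [mul_le_mul_of_nonneg_left hsecond (by positivity : (0 : ℝ) ≤ K * η ^ 2 / 2)]

theorem excess_risk_le (hS : IsSGDProcess P ℱ f η h σ W G) (hf : Differentiable ℝ f)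
    (hlip : LipschitzWith K (gradient f)) {μ fstar : ℝ} (hμ : 0 < μ) (hmin : ∀ v, fstar ≤ f v)
    (hPL : ∀ v, 2 * μ * (f v - fstar) ≤ ‖gradient f v‖ ^ 2) (h0 : MemLp (W 0) 2 P)
    (hh : 0 ≤ h) (hη0 : 0 ≤ η) (hη : η * K * (1 + h) ≤ 1) (hημ : η * μ ≤ 1) (T : ℕ) :
    ∫ ω, f (W T ω) ∂P - fstar ≤
      Real.exp (-(η * μ) * T) * (∫ ω, f (W 0 ω) ∂P - fstar) + η * K * σ ^ 2 / (2 * μ) := by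
  have hfW t := integrable_comp_of_lipschitzWith_gradient hf hlip hmin (hS.memLp_two_iterate h0 t)
  have hPL_integral t : 2 * μ * (∫ ω, f (W t ω) ∂P - fstar) ≤
      ∫ ω, ‖gradient f (W t ω)‖ ^ 2 ∂P := by
    calc 2 * μ * (∫ ω, f (W t ω) ∂P - fstar) = ∫ ω, 2 * μ * (f (W t ω) - fstar) ∂P := by
          rw [integral_const_mul, integral_sub (hfW t) (integrable_const _), integral_const,
            probReal_univ, one_smul]
      _ ≤ ∫ ω, ‖gradient f (W t ω)‖ ^ 2 ∂P :=
          integral_mono (((hfW t).sub (integrable_const _)).const_mul _)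
            ((hlip.memLp_comp (hS.memLp_two_iterate h0 t)).integrable_norm_pow two_ne_zero)
            fun ω => hPL (W t ω)
  refine le_exp_neg_mul_add_of_le_one_sub_mul_add (u := fun t => ∫ ω, f (W t ω) ∂P - fstar)
    (b := η * K * σ ^ 2 / (2 * μ)) hημ (by positivity) ?_ (fun t => ?_) T
  · exact sub_nonneg.2 (by simpa using integral_mono (integrable_const _) (hfW 0) fun ω => hmin _)
  · have hstep := hS.integral_le_integral_sub_add hf hlip hmin h0 hh hη0 hη t
    have hnoise : η * μ * (η * K * σ ^ 2 / (2 * μ)) = K * η ^ 2 * σ ^ 2 / 2 := by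
      field_simp
    nlinarith [hPL_integral t]

end IsSGDProcess

end SGD

theorem excess_risk_random_sampling_general
    {d : ℕ} (𝓛 : EuclideanSpace ℝ (Fin d) → ℝ) (L μPL Lstar h σ η : ℝ)
    (hdiff : Differentiable ℝ 𝓛) (hL : 0 < L)
    (hsmooth : LipschitzWith (Real.toNNReal L) (gradient 𝓛))
    (hμ : 0 < μPL)
    (hattained : ∃ wstar, 𝓛 wstar = Lstar ∧ ∀ v, Lstar ≤ 𝓛 v)
    (hPL : ∀ v, 2 * μPL * (𝓛 v - Lstar) ≤ ‖gradient 𝓛 v‖ ^ 2)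
    {Ω : Type*} {mΩ : MeasurableSpace Ω} (P : Measure Ω) [IsProbabilityMeasure P]
    (ℱ : Filtration ℕ mΩ)
    (W G : ℕ → Ω → EuclideanSpace ℝ (Fin d))
    (hadapted : Adapted ℱ W)
    (hG2 : ∀ t, MemLp (G t) 2 P)
    (w0 : EuclideanSpace ℝ (Fin d)) (hW0 : ∀ ω, W 0 ω = w0)
    (hupdate : ∀ t, ∀ᵐ ω ∂P, W (t + 1) ω = W t ω - η • G t ω)
    (hmean : ∀ t, P[G t | ℱ t] =ᵐ[P] fun ω => gradient 𝓛 (W t ω))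
    (hh : 0 ≤ h)
    (hvar : ∀ t, ∀ᵐ ω ∂P,
      (P[(fun ω' => ‖G t ω' - gradient 𝓛 (W t ω')‖ ^ 2) | ℱ t]) ω ≤
        h / 2 * ‖gradient 𝓛 (W t ω)‖ ^ 2 + σ ^ 2)
    (hη0 : 0 < η) (hη : η ≤ 1 / (L * (1 + h))) (hημ : η * μPL ≤ 1)
    (T : ℕ) :
    (∫ ω, 𝓛 (W T ω) ∂P) - Lstar ≤
      Real.exp (-(η * μPL) * T) * (𝓛 w0 - Lstar) + η * L * σ ^ 2 / (2 * μPL) := by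
  obtain ⟨-, -, hmin⟩ := hattained
  have hS : IsSGDProcess P ℱ 𝓛 η h σ W G :=
    ⟨fun t => (hadapted t).stronglyMeasurable, hG2, hupdate, hmean, hvar⟩
  have hK : (Real.toNNReal L : ℝ) = L := Real.coe_toNNReal L hL.le
  have hη' : η * Real.toNNReal L * (1 + h) ≤ 1 := by
    rw [hK, mul_assoc]
    exact (le_div_iff₀ (by positivity)).1 hη
  have hW0' : W 0 = fun _ => w0 := funext hW0
  have := hS.excess_risk_le hdiff hsmooth hμ hmin hPL (hW0' ▸ memLp_const w0) hh hη0.le hη' hημ T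
  rwa [hK, hW0', integral_const, probReal_univ, one_smul] at this

/-- Excess risk bound for random sampling (Theorem 1(1)): SGD on an `L`-smooth
`μPL`-PL objective with weak-growth stochastic gradients satisfies a linear
convergence bound up to a noise floor. -/
theorem excess_risk_random_sampling
    {d : ℕ} (𝓛 : EuclideanSpace ℝ (Fin d) → ℝ) (L μPL Lstar h σ η : ℝ)
    (hdiff : Differentiable ℝ 𝓛) (hL : 0 < L)
    (hsmooth : LipschitzWith (Real.toNNReal L) (gradient 𝓛))
    (hμ : 0 < μPL)
    (hattained : ∃ wstar, 𝓛 wstar = Lstar ∧ ∀ v, Lstar ≤ 𝓛 v)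
    (hPL : ∀ v, 2 * μPL * (𝓛 v - Lstar) ≤ ‖gradient 𝓛 v‖ ^ 2)
    {Ω : Type*} {mΩ : MeasurableSpace Ω} (P : Measure Ω) [IsProbabilityMeasure P]
    (ℱ : Filtration ℕ mΩ)
    (W G : ℕ → Ω → EuclideanSpace ℝ (Fin d))
    (hadapted : Adapted ℱ W)
    (hGmeas : ∀ t, StronglyMeasurable[ℱ (t + 1)] (G t))
    (hG2 : ∀ t, MemLp (G t) 2 P)
    (w0 : EuclideanSpace ℝ (Fin d)) (hW0 : ∀ ω, W 0 ω = w0)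
    (hupdate : ∀ t, ∀ᵐ ω ∂P, W (t + 1) ω = W t ω - η • G t ω)
    (hmean : ∀ t, P[G t | ℱ t] =ᵐ[P] fun ω => gradient 𝓛 (W t ω))
    (hh : 0 ≤ h) (hσ : 0 ≤ σ)
    (hvar : ∀ t, ∀ᵐ ω ∂P,
      (P[(fun ω' => ‖G t ω' - gradient 𝓛 (W t ω')‖ ^ 2) | ℱ t]) ω ≤
        h / 2 * ‖gradient 𝓛 (W t ω)‖ ^ 2 + σ ^ 2)
    (hη0 : 0 < η) (hη : η ≤ 1 / (L * (1 + h))) (hημ : η * μPL ≤ 1)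
    (T : ℕ) :
    (∫ ω, 𝓛 (W T ω) ∂P) - Lstar ≤
      Real.exp (-(η * μPL) * T) * (𝓛 w0 - Lstar) + η * L * σ ^ 2 / (2 * μPL) :=
  excess_risk_random_sampling_general 𝓛 L μPL Lstar h σ η hdiff hL hsmooth hμ hattained hPL P ℱ W G
    hadapted hG2 w0 hW0 hupdate hmean hh hvar hη0 hη hημ T
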